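/- (Upper bound on the oracle threshold) Assume (A1), (B1) and (B2) with constant r, and let α ∈ (0,1). Then 1 − α ≤ (1 − c(α)/r)^B, and consequently c(α) ≤ r (1 − (1−α)^{1/B}) ≤ r log(1/(1−α)) / B. -/

import Mathlib

/-!
Integrating the lower bound of (B2) over `Q` and using (B1) gives `Q(p_j ≤ c) ≥ c / r` for every
true null `j`, so each block minimum `p^(b)` exceeds `c` with probability at most `1 - c / r`.
By (A1) with `g = g' = id` the block minima are independent, hence for `c = c(α) ∈ S`
`1 - α ≤ Q(min_{j ∈ I} p_j > c) = ∏_b Q(p^(b) > c) ≤ (1 - c / r)^B`.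
Taking `B`-th roots and `1 - eᵗ ≤ -t` give the other two bounds.
-/

open scoped ENNReal

noncomputable section

/-- A multiple-testing framework with `m` hypotheses: data space `Ω` with distribution `Q`,
`p`-values `p j` taking values in the finite set `S ⊆ [0,1]`, set of true nulls `I`,
a finite group `G` of measurable bijections of the data space, and a partition
`A 1, …, A B` of the hypotheses into blocks, each containing a true null. -/
structure Framework (m : ℕ) where
  Ω : Type
  [meas : MeasurableSpace Ω]
  Q : MeasureTheory.Measure Ω
  Qprob : MeasureTheory.IsProbabilityMeasure Q
  S : Finset ℝ
  hS : ∀ s ∈ S, 0 ≤ s ∧ s ≤ 1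
  p : Fin m → Ω → ℝ
  p_meas : ∀ j, Measurable (p j)
  p_mem : ∀ j w, p j w ∈ S
  I : Finset (Fin m)
  G : Finset (Ω ≃ᵐ Ω)
  G_one : MeasurableEquiv.refl Ω ∈ G
  G_mul : ∀ g ∈ G, ∀ g' ∈ G, g.trans g' ∈ G
  G_inv : ∀ g ∈ G, g.symm ∈ G
  B : ℕ
  B_pos : 0 < B
  A : Fin B → Finset (Fin m)
  A_disj : ∀ b b', b ≠ b' → Disjoint (A b) (A b')
  A_cover : ∀ j, ∃ b, j ∈ A b
  A_I : ∀ b, (A b ∩ I).Nonempty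

attribute [instance] Framework.meas Framework.Qprob

open MeasureTheory ProbabilityTheory Filter

namespace Framework

variable {m : ℕ} (F : Framework m)

/-- Minimum of the `p`-values over the index set `J` (`1` by convention if `J = ∅`). -/
def fmin (J : Finset (Fin m)) (w : F.Ω) : ℝ :=
  if h : J.Nonempty then J.inf' h (fun j => F.p j w) else 1

/-- `min_{j ∈ I} p_j(w)`, the minimal `p`-value over the true null hypotheses. -/
def nullMin : F.Ω → ℝ := F.fmin F.I

/-- `min_{1 ≤ j ≤ m} p_j(w)`, the minimal `p`-value over all hypotheses. -/
def fullMin : F.Ω → ℝ := F.fmin Finset.univ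

/-- `p^(b)(w) = min_{j ∈ A_b ∩ I} p_j(w)`, the minimal null `p`-value in block `b`. -/
def blockMin (b : Fin F.B) : F.Ω → ℝ := F.fmin (F.A b ∩ F.I)

/-- The permutation probability `P*(E)(w) = |G|⁻¹ ∑_{g ∈ G} 1{g w ∈ E}`. -/
def Pstar (E : Set F.Ω) (w : F.Ω) : ℝ :=
  (F.G.card : ℝ)⁻¹ * ∑ g ∈ F.G, E.indicator (fun _ => (1 : ℝ)) (g w)

/-- The oracle threshold `c(α) = max {s ∈ S : Q(min_{j ∈ I} p_j(W) ≤ s) ≤ α}`,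
with `max ∅ := 0`. -/
def oracle (α : ℝ) : ℝ :=
  WithBot.unbotD 0 ((F.S.filter (fun s => (F.Q {w | F.nullMin w ≤ s}).toReal ≤ α)).max)

/-- The single-step Westfall--Young threshold
`ĉ(α)(w) = max {s ∈ S : P*(min_{1≤j≤m} p_j(W) ≤ s)(w) ≤ α}`, with `max ∅ := 0`. -/
def wy (α : ℝ) (w : F.Ω) : ℝ :=
  WithBot.unbotD 0 ((F.S.filter (fun s => F.Pstar {w' | F.fullMin w' ≤ s} w ≤ α)).max)

/-- The maximal block size `m_B = max_b |A_b|`. -/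
def mB : ℕ := Finset.univ.sup (fun b : Fin F.B => (F.A b).card)

/-- `π_b(c) = Q(p^(b)(W) ≤ c)`. -/
def piB (b : Fin F.B) (c : ℝ) : ℝ := (F.Q {w | F.blockMin b w ≤ c}).toReal

/-- Assumption (A1): for every pair `g, g' ∈ G`, the random variables
`min (p^(b)(gW)) (p^(b)(g'W))`, `b = 1, …, B`, are mutually independent under `Q`. -/
def A1 : Prop :=
  ∀ g ∈ F.G, ∀ g' ∈ F.G,
    iIndepFun
      (fun b : Fin F.B => fun w => min (F.blockMin b (g w)) (F.blockMin b (g' w))) F.Q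

/-- Assumption (B1): for `G` uniformly distributed on the permutation group and independent
of `W`, the joint distribution of `(p_j(GW))_{j ∈ I}` equals that of `(p_j(W))_{j ∈ I}`;
expressed as an equality between the uniform mixture of the pushforwards and the
pushforward of `Q` itself. -/
def B1 : Prop :=
  (F.G.card : ℝ≥0∞)⁻¹ •
      (∑ g ∈ F.G, Measure.map (fun w => fun j : F.I => F.p j (g w)) F.Q)
    = Measure.map (fun w => fun j : F.I => F.p j w) F.Q

/-- Assumption (B2) with constant `r`:
`r⁻¹ s ≤ P*(p_j(W) ≤ s)(w) ≤ r s` for all `j`, all `s ∈ S` and all `w`. -/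
def B2 (r : ℝ) : Prop :=
  ∀ j : Fin m, ∀ s ∈ F.S, ∀ w : F.Ω,
    r⁻¹ * s ≤ F.Pstar {w' | F.p j w' ≤ s} w ∧ F.Pstar {w' | F.p j w' ≤ s} w ≤ r * s

/-- Assumption (B3): null `p`-values are uniformly distributed on `S`:
`Q(p_j(W) ≤ s) = s` for all `j ∈ I`, `s ∈ S`. -/
def B3 : Prop :=
  ∀ j ∈ F.I, ∀ s ∈ F.S, (F.Q {w | F.p j w ≤ s}).toReal = s

end Framework

/-- For `y > 0` this is `1 - exp t ≤ -t` at `t = a log y`. -/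
lemma Real.one_sub_rpow_le_mul_log_one_div {y : ℝ} (hy : 0 < y) (a : ℝ) :
    1 - y ^ a ≤ a * Real.log (1 / y) := by
  rw [Real.rpow_def_of_pos hy, one_div, Real.log_inv]
  linarith [Real.add_one_le_exp (Real.log y * a)]

namespace Framework

variable {m : ℕ} (F : Framework m)

lemma fmin_le_iff {J : Finset (Fin m)} (hJ : J.Nonempty) (c : ℝ) (w : F.Ω) :
    F.fmin J w ≤ c ↔ ∃ j ∈ J, F.p j w ≤ c := by
  rw [fmin, dif_pos hJ, Finset.inf'_le_iff]

lemma lt_fmin_iff {J : Finset (Fin m)} (hJ : J.Nonempty) (c : ℝ) (w : F.Ω) :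
    c < F.fmin J w ↔ ∀ j ∈ J, c < F.p j w := by
  rw [fmin, dif_pos hJ, Finset.lt_inf'_iff]

lemma measurableSet_fmin_le {J : Finset (Fin m)} (hJ : J.Nonempty) (c : ℝ) :
    MeasurableSet {w | F.fmin J w ≤ c} := by
  have hunion : {w | F.fmin J w ≤ c} = ⋃ j ∈ J, {w | F.p j w ≤ c} := by
    ext w
    simp [F.fmin_le_iff hJ]
  rw [hunion]
  exact J.measurableSet_biUnion fun j _ => measurableSet_le (F.p_meas j) measurable_const

lemma I_nonempty : F.I.Nonempty :=
  (F.A_I ⟨0, F.B_pos⟩).mono Finset.inter_subset_right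

lemma lt_nullMin_iff (c : ℝ) (w : F.Ω) :
    c < F.nullMin w ↔ ∀ b, c < F.blockMin b w := by
  simp only [nullMin, blockMin, F.lt_fmin_iff F.I_nonempty, F.lt_fmin_iff (F.A_I _),
    Finset.mem_inter]
  constructor
  · exact fun h b j hj => h j hj.2
  · intro h j hj
    obtain ⟨b, hb⟩ := F.A_cover j
    exact h b j ⟨hb, hj⟩

lemma Pstar_univ (w : F.Ω) : F.Pstar Set.univ w = 1 := by
  have hG : (F.G.card : ℝ) ≠ 0 := by exact_mod_cast (Finset.card_pos.mpr ⟨_, F.G_one⟩).ne'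
  simp [Pstar, hG]

lemma one_le_of_B2 {r : ℝ} (hB2 : F.B2 r) : 1 ≤ r := by
  obtain ⟨w⟩ : Nonempty F.Ω := nonempty_of_isProbabilityMeasure F.Q
  obtain ⟨j⟩ : Nonempty (Fin m) := ⟨F.I_nonempty.choose⟩
  have hS : F.S.Nonempty := ⟨_, F.p_mem j w⟩
  set s := F.S.max' hS
  obtain ⟨hs0, hs1⟩ := F.hS s (F.S.max'_mem hS)
  have hall : {w' | F.p j w' ≤ s} = Set.univ :=
    Set.eq_univ_of_forall fun w' => F.S.le_max' _ (F.p_mem j w')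
  have hrs : 1 ≤ r * s := by
    simpa [hall, Pstar_univ] using (hB2 j s (F.S.max'_mem hS) w).2
  have hr : 0 < r := by
    by_contra! hr
    nlinarith
  nlinarith [mul_nonneg hr.le (sub_nonneg.2 hs1)]

lemma Pstar_eq_sum_indicator (E : Set F.Ω) : F.Pstar E =
    fun w => (F.G.card : ℝ)⁻¹ * ∑ g ∈ F.G, (g ⁻¹' E).indicator (fun _ => (1 : ℝ)) w :=
  rfl

lemma integrable_Pstar {E : Set F.Ω} (hE : MeasurableSet E) : Integrable (F.Pstar E) F.Q := by
  rw [Pstar_eq_sum_indicator]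
  exact (integrable_finsetSum _ fun g _ =>
    (integrable_const 1).indicator (g.measurable hE)).const_mul _

lemma integral_Pstar {E : Set F.Ω} (hE : MeasurableSet E) :
    ∫ w, F.Pstar E w ∂F.Q = (F.G.card : ℝ)⁻¹ * ∑ g ∈ F.G, F.Q.real (g ⁻¹' E) := by
  have hg : ∀ g : F.Ω ≃ᵐ F.Ω, MeasurableSet (g ⁻¹' E) := fun g => g.measurable hE
  rw [Pstar_eq_sum_indicator, integral_const_mul,
    integral_finsetSum _ fun g _ => (integrable_const 1).indicator (hg g)]
  simp_rw [integral_indicator_const (1 : ℝ) (hg _), smul_eq_mul, mul_one]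

lemma measureReal_eq_average_of_B1 (hB1 : F.B1) {j : Fin m} (hj : j ∈ F.I)
    {E : Set ℝ} (hE : MeasurableSet E) :
    (F.G.card : ℝ)⁻¹ * ∑ g ∈ F.G, F.Q.real (g ⁻¹' (F.p j ⁻¹' E)) =
      F.Q.real (F.p j ⁻¹' E) := by
  have hproj : ∀ g : F.Ω ≃ᵐ F.Ω, Measurable fun w => fun i : F.I => F.p i (g w) :=
    fun g => measurable_pi_lambda _ fun i => (F.p_meas i).comp g.measurable
  have hproj₀ : Measurable fun w => fun i : F.I => F.p i w :=
    measurable_pi_lambda _ fun i => F.p_meas i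
  have hT : MeasurableSet {f : F.I → ℝ | f ⟨j, hj⟩ ∈ E} := measurable_pi_apply _ hE
  have hB1E := congrArg (fun μ : Measure (F.I → ℝ) => μ {f | f ⟨j, hj⟩ ∈ E}) hB1
  simp only [Measure.smul_apply, smul_eq_mul, Measure.finsetSum_apply,
    Measure.map_apply (hproj _) hT, Measure.map_apply hproj₀ hT] at hB1E
  replace hB1E := congrArg ENNReal.toReal hB1E
  rw [ENNReal.toReal_mul, ENNReal.toReal_inv, ENNReal.toReal_natCast,
    ENNReal.toReal_sum fun g _ => measure_ne_top _ _] at hB1E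
  exact hB1E

lemma inv_mul_le_measureReal_of_B1_B2 {r : ℝ} (hB1 : F.B1) (hB2 : F.B2 r) {j : Fin m}
    (hj : j ∈ F.I) {c : ℝ} (hc : c ∈ F.S) :
    r⁻¹ * c ≤ F.Q.real {w | F.p j w ≤ c} := by
  have hE : MeasurableSet {w | F.p j w ≤ c} := measurableSet_le (F.p_meas j) measurable_const
  calc r⁻¹ * c = ∫ _, r⁻¹ * c ∂F.Q := by simp
    _ ≤ ∫ w, F.Pstar {w | F.p j w ≤ c} w ∂F.Q :=
      integral_mono (integrable_const _) (F.integrable_Pstar hE) fun w => (hB2 j c hc w).1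
    _ = F.Q.real {w | F.p j w ≤ c} := by
      rw [F.integral_Pstar hE]
      exact F.measureReal_eq_average_of_B1 hB1 hj measurableSet_Iic

lemma iIndepFun_blockMin (hA1 : F.A1) : iIndepFun F.blockMin F.Q := by
  simpa only [MeasurableEquiv.refl_apply, min_self] using hA1 _ F.G_one _ F.G_one

lemma measurableSet_blockMin_le (b : Fin F.B) (c : ℝ) :
    MeasurableSet {w | F.blockMin b w ≤ c} :=
  F.measurableSet_fmin_le (F.A_I b) c

lemma measurableSet_nullMin_le (c : ℝ) : MeasurableSet {w | F.nullMin w ≤ c} :=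
  F.measurableSet_fmin_le F.I_nonempty c

/-- `{min_{j ∈ I} p_j > c}` is the intersection of the independent events `{p^(b) > c}`. -/
lemma one_sub_measureReal_nullMin_le (hind : iIndepFun F.blockMin F.Q) (c : ℝ) :
    1 - F.Q.real {w | F.nullMin w ≤ c} = ∏ b, (1 - F.Q.real {w | F.blockMin b w ≤ c}) := by
  have hcompl :
      {w | F.nullMin w ≤ c}ᶜ = ⋂ b ∈ Finset.univ, F.blockMin b ⁻¹' Set.Ioi c := by
    ext w
    simp [F.lt_nullMin_iff]
  have hblock : ∀ b, F.blockMin b ⁻¹' Set.Ioi c = {w | F.blockMin b w ≤ c}ᶜ := by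
    intro b
    ext w
    simp
  rw [← probReal_compl_eq_one_sub (F.measurableSet_nullMin_le c), measureReal_def,
    hcompl, hind.measure_inter_preimage_eq_mul _ fun _ _ => measurableSet_Ioi,
    ENNReal.toReal_prod]
  refine Finset.prod_congr rfl fun b _ => ?_
  rw [hblock, ← measureReal_def, probReal_compl_eq_one_sub (F.measurableSet_blockMin_le b c)]

lemma inv_mul_le_measureReal_blockMin_le {r : ℝ} (hB1 : F.B1) (hB2 : F.B2 r) (b : Fin F.B)
    {c : ℝ} (hc : c ∈ F.S) : r⁻¹ * c ≤ F.Q.real {w | F.blockMin b w ≤ c} := by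
  obtain ⟨j, hj⟩ := F.A_I b
  refine (F.inv_mul_le_measureReal_of_B1_B2 hB1 hB2 (Finset.mem_inter.mp hj).2 hc).trans ?_
  exact measureReal_mono fun w hw => (F.fmin_le_iff (F.A_I b) c w).mpr ⟨j, hj, hw⟩

lemma one_sub_measureReal_nullMin_le_le_pow {r : ℝ} (hA1 : F.A1) (hB1 : F.B1) (hB2 : F.B2 r)
    {c : ℝ} (hc : c ∈ F.S) :
    1 - F.Q.real {w | F.nullMin w ≤ c} ≤ (1 - c / r) ^ F.B := by
  rw [F.one_sub_measureReal_nullMin_le (F.iIndepFun_blockMin hA1)]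
  calc ∏ b, (1 - F.Q.real {w | F.blockMin b w ≤ c})
      ≤ ∏ _b : Fin F.B, (1 - c / r) := by
        refine Finset.prod_le_prod (fun b _ => sub_nonneg.mpr measureReal_le_one) fun b _ => ?_
        linarith [F.inv_mul_le_measureReal_blockMin_le hB1 hB2 b hc, inv_mul_eq_div r c]
    _ = (1 - c / r) ^ F.B := by simp

lemma oracle_eq_zero_or (α : ℝ) :
    F.oracle α = 0 ∨
      F.oracle α ∈ F.S ∧ F.Q.real {w | F.nullMin w ≤ F.oracle α} ≤ α := by
  rw [oracle]
  rcases h : (F.S.filter fun s => (F.Q {w | F.nullMin w ≤ s}).toReal ≤ α).max with _ | c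
  · exact Or.inl rfl
  · exact Or.inr (Finset.mem_filter.mp (Finset.mem_of_max h))

lemma oracle_mem_Icc (α : ℝ) : F.oracle α ∈ Set.Icc 0 1 := by
  rcases F.oracle_eq_zero_or α with h | ⟨h, -⟩
  · simp [h]
  · exact F.hS _ h

lemma one_sub_le_pow_oracle {r : ℝ} (hA1 : F.A1) (hB1 : F.B1) (hB2 : F.B2 r) (α : ℝ)
    (hα : 0 ≤ α) :
    1 - α ≤ (1 - F.oracle α / r) ^ F.B := by
  rcases F.oracle_eq_zero_or α with h | ⟨hS, hα'⟩
  · simp [h, hα]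
  · linarith [F.one_sub_measureReal_nullMin_le_le_pow hA1 hB1 hB2 hS]

end Framework

/-- **Upper bound on the oracle threshold.** Under (A1), (B1) and (B2) with constant `r`,
for `α ∈ (0,1)`: `1 − α ≤ (1 − c(α)/r)^B`, and consequently
`c(α) ≤ r(1 − (1−α)^{1/B}) ≤ r·log(1/(1−α))/B`. -/
theorem oracle_threshold_upper_bound
    {m : ℕ} (F : Framework m) (r : ℝ)
    (hA1 : F.A1) (hB1 : F.B1) (hB2 : F.B2 r)
    (α : ℝ) (hα : α ∈ Set.Ioo (0 : ℝ) 1) :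
    1 - α ≤ (1 - F.oracle α / r) ^ F.B ∧
    F.oracle α ≤ r * (1 - (1 - α) ^ ((F.B : ℝ)⁻¹)) ∧
    r * (1 - (1 - α) ^ ((F.B : ℝ)⁻¹)) ≤ r * Real.log (1 / (1 - α)) / (F.B : ℝ) := by
  obtain ⟨hα0, hα1⟩ := hα
  have hr : 0 < r := one_pos.trans_le (F.one_le_of_B2 hB2)
  have hB : (0 : ℝ) < F.B := by exact_mod_cast F.B_pos
  have hbound := F.one_sub_le_pow_oracle hA1 hB1 hB2 α hα0.le
  have hbase : 0 ≤ 1 - F.oracle α / r := by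
    rw [sub_nonneg, div_le_one hr]
    exact (F.oracle_mem_Icc α).2.trans (F.one_le_of_B2 hB2)
  have hroot : (1 - α) ^ ((F.B : ℝ)⁻¹) ≤ 1 - F.oracle α / r := by
    rwa [Real.rpow_inv_le_iff_of_pos (by linarith) hbase hB, Real.rpow_natCast]
  refine ⟨hbound, (div_le_iff₀' hr).mp (by linarith), ?_⟩
  rw [mul_div_assoc, div_eq_inv_mul]
  exact mul_le_mul_of_nonneg_left (Real.one_sub_rpow_le_mul_log_one_div (by linarith) _) hr.le
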